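/- arXiv:1406.4555 — 2 statements merged into one kernel-verified Lean document; each statement's English description precedes it below -/
import Mathlib

section
/- In the root system of type D_n, for any non-simple positive root γ, the number of unordered pairs {α, β} of positive roots with α + β = γ equals ht(γ) - 1, where ht(γ) = Σ_i n_i for γ = Σ_i n_i α_i. -/
open Finset

/-- Standard basis vector `ε_i` (1-indexed) in the ambient space `ℕ → ℤ`. -/
noncomputable def epsD (i : ℕ) : ℕ → ℤ := Pi.single i 1

/-- Simple roots of type `D_n` (1-indexed). -/
noncomputable def alphaD (n i : ℕ) : ℕ → ℤ :=
  if i = n then epsD (n - 1) + epsD n else epsD i - epsD (i + 1)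

/-- Positive roots of type `D_n`: `ε_i ± ε_j` for `1 ≤ i < j ≤ n`. -/
def IsPosRootD (n : ℕ) (v : ℕ → ℤ) : Prop :=
  ∃ i j : ℕ, 1 ≤ i ∧ i < j ∧ j ≤ n ∧ (v = epsD i - epsD j ∨ v = epsD i + epsD j)

/-!
Write a positive root as `ε_a + s ε_b` with `a < b`, `s = ±1`, and `γ = ε_i + u ε_j`.
Comparing coordinates shows that every pair summing to `γ` is
`{ε_i + σ ε_k, γ - (ε_i + σ ε_k)}`, where either `i < k < j` and `σ = -1`, or `u = 1`,
`j < k ≤ n` and `σ = ±1`. These pairs are pairwise distinct, since `ε_i + σ ε_k` is the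
only member with `i`-th coordinate `1`, so there are `(j - i - 1) + [u = 1] 2 (n - j)` of them.
The linear form `v ↦ ∑_{k < n} (n - k) v_k` is `1` on every simple root, so it computes the
height, which is `j - i` for `u = -1` and `2n - i - j` for `u = 1`.
-/

lemma epsD_apply (i k : ℕ) : epsD i k = if k = i then 1 else 0 := Pi.single_apply i 1 k

lemma isPosRootD_iff {n : ℕ} {v : ℕ → ℤ} :
    IsPosRootD n v ↔ ∃ a b : ℕ, ∃ s : ℤ,
      1 ≤ a ∧ a < b ∧ b ≤ n ∧ (s = 1 ∨ s = -1) ∧ v = epsD a + s • epsD b := by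
  constructor
  · rintro ⟨a, b, ha, hab, hbn, rfl | rfl⟩
    · exact ⟨a, b, -1, ha, hab, hbn, Or.inr rfl, by module⟩
    · exact ⟨a, b, 1, ha, hab, hbn, Or.inl rfl, by module⟩
  · rintro ⟨a, b, s, ha, hab, hbn, rfl | rfl, rfl⟩
    · exact ⟨a, b, ha, hab, hbn, Or.inr (by module)⟩
    · exact ⟨a, b, ha, hab, hbn, Or.inl (by module)⟩

lemma eq_of_epsD_add_smul_epsD_add_eq {a b c d i j : ℕ} {s t u : ℤ}
    (hab : a < b) (hcd : c < d) (hac : a ≤ c) (hij : i < j)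
    (hs : s = 1 ∨ s = -1) (ht : t = 1 ∨ t = -1) (hu : u = 1 ∨ u = -1)
    (h : epsD a + s • epsD b + (epsD c + t • epsD d) = epsD i + u • epsD j) :
    a = i ∧ ((b = c ∧ s = -1 ∧ d = j ∧ t = u) ∨ (c = j ∧ u = 1 ∧ d = b ∧ t = -s)) := by
  have coord (x : ℕ) : (if x = a then 1 else 0) + s * (if x = b then 1 else 0) +
      ((if x = c then 1 else 0) + t * (if x = d then 1 else 0)) =
      (if x = i then 1 else 0) + u * (if x = j then 1 else 0) := by
    simpa only [Pi.add_apply, Pi.smul_apply, smul_eq_mul, epsD_apply] using congrFun h x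
  clear h
  obtain rfl : a = i := by
    have := coord a
    have := coord i
    grind
  refine ⟨rfl, ?_⟩
  rcases eq_or_ne b c with rfl | hbc
  · have := coord b
    have := coord d
    grind
  · have := coord b
    have := coord c
    grind

def rootPairsD (n : ℕ) (γ : ℕ → ℤ) : Set (Sym2 (ℕ → ℤ)) :=
  {p | ∃ α β : ℕ → ℤ, p = s(α, β) ∧ IsPosRootD n α ∧ IsPosRootD n β ∧ α + β = γ}

lemma mk_sub_mem_rootPairsD {n : ℕ} {α γ : ℕ → ℤ} (hα : IsPosRootD n α)
    (hβ : IsPosRootD n (γ - α)) : s(α, γ - α) ∈ rootPairsD n γ :=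
  ⟨α, γ - α, rfl, hα, hβ, add_sub_cancel α γ⟩

/-- `(k, σ)` encodes the pair `{ε_i + σ ε_k, γ - (ε_i + σ ε_k)}`, where `γ = ε_i + u ε_j`. -/
def pairIndexD (n i j : ℕ) (u : ℤ) : Finset (ℕ × ℤ) :=
  Ioo i j ×ˢ {-1} ∪ if u = 1 then Ioc j n ×ˢ {1, -1} else ∅

lemma mem_pairIndexD {n i j k : ℕ} {u σ : ℤ} :
    (k, σ) ∈ pairIndexD n i j u ↔
      (i < k ∧ k < j ∧ σ = -1) ∨ (u = 1 ∧ j < k ∧ k ≤ n ∧ (σ = 1 ∨ σ = -1)) := by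
  unfold pairIndexD
  split_ifs <;> grind

lemma card_pairIndexD (n i j : ℕ) (u : ℤ) :
    #(pairIndexD n i j u) = j - i - 1 + if u = 1 then 2 * (n - j) else 0 := by
  have hdisj : Disjoint (Ioo i j ×ˢ {-1}) (Ioc j n ×ˢ ({1, -1} : Finset ℤ)) :=
    disjoint_product.2 (Or.inl (disjoint_left.2 fun k hk hk' => by
      simp only [mem_Ioo, mem_Ioc] at hk hk'; omega))
  unfold pairIndexD
  split_ifs
  · rw [card_union_of_disjoint hdisj]
    simp [mul_comm]
  · simp

lemma rootPairsD_epsD_add_smul_epsD {n i j : ℕ} {u : ℤ} (hi : 1 ≤ i) (hij : i < j)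
    (hjn : j ≤ n) (hu : u = 1 ∨ u = -1) :
    rootPairsD n (epsD i + u • epsD j) =
      (fun p : ℕ × ℤ => s(epsD i + p.2 • epsD p.1,
        epsD i + u • epsD j - (epsD i + p.2 • epsD p.1))) '' pairIndexD n i j u := by
  ext q
  constructor
  · rintro ⟨α, β, rfl, hα, hβ, hsum⟩
    rw [isPosRootD_iff] at hα hβ
    obtain ⟨a, b, s, -, hab, hbn, hs, rfl⟩ := hα
    obtain ⟨c, d, t, -, hcd, hdn, ht, rfl⟩ := hβ
    wlog hac : a ≤ c generalizing a b c d s t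
    · rw [Sym2.eq_swap]
      exact this c d t hcd hdn ht a b s hab hbn hs (by rwa [add_comm]) (by omega)
    obtain ⟨rfl, ⟨rfl, rfl, rfl, rfl⟩ | ⟨rfl, rfl, rfl, rfl⟩⟩ :=
      eq_of_epsD_add_smul_epsD_add_eq hab hcd hac hij hs ht hu hsum
    · exact ⟨(b, -1), mem_pairIndexD.2 (Or.inl ⟨hab, hcd, rfl⟩),
        by simp only [← hsum, add_sub_cancel_left]⟩
    · exact ⟨(d, s), mem_pairIndexD.2 (Or.inr ⟨rfl, hcd, hdn, hs⟩),
        by simp only [← hsum, add_sub_cancel_left]⟩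
  · rintro ⟨⟨k, σ⟩, hk, rfl⟩
    rcases mem_pairIndexD.1 hk with ⟨hik, hkj, rfl⟩ | ⟨rfl, hjk, hkn, hσ⟩
    · exact mk_sub_mem_rootPairsD
        (isPosRootD_iff.2 ⟨i, k, -1, hi, hik, by omega, Or.inr rfl, rfl⟩)
        (isPosRootD_iff.2 ⟨k, j, u, by omega, hkj, hjn, hu, by module⟩)
    · exact mk_sub_mem_rootPairsD
        (isPosRootD_iff.2 ⟨i, k, σ, hi, by omega, hkn, hσ, rfl⟩)
        (isPosRootD_iff.2 ⟨j, k, -σ, by omega, hjk, hkn, by omega, by module⟩)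

lemma injOn_sym2_mk_sub {G : Type*} [AddCommGroup G] {S : Set G} {γ : G}
    (h : ∀ x ∈ S, ∀ y ∈ S, x + y ≠ γ) : S.InjOn fun x => s(x, γ - x) := by
  intro x hx y hy hxy
  rcases Sym2.eq_iff.1 hxy with ⟨hxy, -⟩ | ⟨hxy, -⟩
  · exact hxy
  · exact absurd (eq_sub_iff_add_eq.1 hxy) (h x hx y hy)

lemma ncard_rootPairsD_epsD_add_smul_epsD {n i j : ℕ} {u : ℤ} (hi : 1 ≤ i) (hij : i < j)
    (hjn : j ≤ n) (hu : u = 1 ∨ u = -1) :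
    (rootPairsD n (epsD i + u • epsD j)).ncard =
      j - i - 1 + if u = 1 then 2 * (n - j) else 0 := by
  set K := pairIndexD n i j u
  set e : ℕ × ℤ → ℕ → ℤ := fun p => epsD i + p.2 • epsD p.1
  have hK : ∀ p ∈ K, i < p.1 ∧ (p.2 = 1 ∨ p.2 = -1) := by
    rintro ⟨k, σ⟩ hp
    rcases mem_pairIndexD.1 hp with ⟨hik, -, rfl⟩ | ⟨-, hjk, -, hσ⟩
    exacts [⟨hik, Or.inr rfl⟩, ⟨by omega, hσ⟩]
  have he : Set.InjOn e K := by
    rintro ⟨k, σ⟩ hp ⟨k', σ'⟩ hp' h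
    have := congrFun h k
    have := congrFun h k'
    have := hK _ hp
    have := hK _ hp'
    simp only [e, Pi.add_apply, Pi.smul_apply, smul_eq_mul, epsD_apply] at *
    grind
  have hsum : ∀ x ∈ e '' K, ∀ y ∈ e '' K, x + y ≠ epsD i + u • epsD j := by
    rintro _ ⟨p, hp, rfl⟩ _ ⟨p', hp', rfl⟩ h
    have := congrFun h i
    have := hK p hp
    have := hK p' hp'
    simp only [e, Pi.add_apply, Pi.smul_apply, smul_eq_mul, epsD_apply] at *
    grind
  rw [rootPairsD_epsD_add_smul_epsD hi hij hjn hu, ← card_pairIndexD, ← Set.ncard_coe_finset]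
  exact ((injOn_sym2_mk_sub hsum).comp he (Set.mapsTo_image e K)).ncard_image

def heightD (n : ℕ) : (ℕ → ℤ) →ₗ[ℤ] ℤ :=
  ∑ k ∈ Icc 1 (n - 1), ((n : ℤ) - k) • LinearMap.proj k

lemma heightD_epsD {n m : ℕ} (hm : 1 ≤ m) (hmn : m ≤ n) : heightD n (epsD m) = n - m := by
  simp only [heightD, LinearMap.sum_apply, LinearMap.smul_apply, LinearMap.proj_apply,
    epsD_apply, smul_eq_mul, mul_ite, mul_one, mul_zero, sum_ite_eq', mem_Icc]
  split_ifs <;> omega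

lemma heightD_alphaD {n m : ℕ} (hn : 2 ≤ n) (hm : 1 ≤ m) (hmn : m ≤ n) :
    heightD n (alphaD n m) = 1 := by
  unfold alphaD
  split_ifs with h
  · subst h
    rw [map_add, heightD_epsD (by omega) (by omega), heightD_epsD hm hmn]
    omega
  · rw [map_sub, heightD_epsD hm hmn, heightD_epsD (by omega) (by omega)]
    omega

lemma heightD_sum_smul_alphaD {n : ℕ} (hn : 2 ≤ n) (c : ℕ → ℕ) :
    heightD n (∑ i ∈ Icc 1 n, (c i : ℤ) • alphaD n i) = ((∑ i ∈ Icc 1 n, c i : ℕ) : ℤ) := by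
  push_cast
  rw [map_sum]
  refine sum_congr rfl fun i hi => ?_
  rw [map_smul, heightD_alphaD hn (mem_Icc.1 hi).1 (mem_Icc.1 hi).2, smul_eq_mul, mul_one]

theorem stmt4_general (n : ℕ) (γ : ℕ → ℤ) (hγ : IsPosRootD n γ)
    (c : ℕ → ℕ) (hc : γ = ∑ i ∈ Finset.Icc 1 n, (c i : ℤ) • alphaD n i) :
    {p : Sym2 (ℕ → ℤ) | ∃ α β : ℕ → ℤ, p = s(α, β) ∧
        IsPosRootD n α ∧ IsPosRootD n β ∧ α + β = γ}.ncard
      = (∑ i ∈ Finset.Icc 1 n, c i) - 1 := by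
  obtain ⟨i, j, u, hi, hij, hjn, hu, rfl⟩ := isPosRootD_iff.1 hγ
  have hheight := heightD_sum_smul_alphaD (show 2 ≤ n by omega) c
  rw [← hc, map_add, map_smul, heightD_epsD hi (by omega), heightD_epsD (by omega) hjn,
    smul_eq_mul] at hheight
  change (rootPairsD n _).ncard = _
  rw [ncard_rootPairsD_epsD_add_smul_epsD hi hij hjn hu]
  rcases hu with rfl | rfl <;> norm_num <;> omega

/-- for any non-simple positive root `γ = Σ n_i α_i` of type `D_n`,
the number of unordered pairs `{α, β}` of positive roots with `α + β = γ`
equals `ht(γ) - 1 = (Σ n_i) - 1`. -/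
theorem stmt4 (n : ℕ) (hn : 4 ≤ n) (γ : ℕ → ℤ) (hγ : IsPosRootD n γ)
    (hns : ∀ i, γ ≠ alphaD n i)
    (c : ℕ → ℕ) (hc : γ = ∑ i ∈ Finset.Icc 1 n, (c i : ℤ) • alphaD n i) :
    {p : Sym2 (ℕ → ℤ) | ∃ α β : ℕ → ℤ, p = s(α, β) ∧
        IsPosRootD n α ∧ IsPosRootD n β ∧ α + β = γ}.ncard
      = (∑ i ∈ Finset.Icc 1 n, c i) - 1 :=
  stmt4_general n γ hγ c hc
end

section
/- In the AR quiver Γ_Q of a Dynkin quiver Q of type D_n, if α and β are positive roots located at vertices (n-1, k) and (n, k) respectively (same horizontal coordinate, levels n-1 and n), then α + β = 2ε_a for some 1 ≤ a ≤ n-1; moreover {α, β} = {ε_a + ε_n, ε_a - ε_n} if ξ_{n-1} = ξ_n, and {α, β} = {ε_a + ε_{n-1}, ε_a - ε_{n-1}} if |ξ_{n-1} - ξ_n| = 2. -/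
open Finset
open scoped Classical

/-- The standard inner product on the span of `ε_1, …, ε_n`. -/
noncomputable def dotD (n : ℕ) (u v : ℕ → ℤ) : ℤ := ∑ k ∈ Finset.Icc 1 n, u k * v k

/-- The simple reflection `s_i` of type `D_n` acting on `ℕ → ℤ`. -/
noncomputable def refD (n i : ℕ) (v : ℕ → ℤ) : ℕ → ℤ :=
  v - dotD n v (alphaD n i) • alphaD n i

/-- The edges of the type `D_n` Dynkin diagram: `i — (i+1)` for `1 ≤ i ≤ n-2`
and `(n-2) — n`. -/
def edgeD (n i j : ℕ) : Prop :=
  (1 ≤ i ∧ i + 1 = j ∧ j ≤ n - 1) ∨ (1 ≤ j ∧ j + 1 = i ∧ i ≤ n - 1) ∨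
  (i = n - 2 ∧ j = n) ∨ (i = n ∧ j = n - 2)

/-- The composition `s_{i_1} ∘ s_{i_2} ∘ ⋯ ∘ s_{i_r}` for a word `L = [i_1, …, i_r]`;
for an enumeration of the vertices adapted to `Q` this is the Coxeter element `τ`
adapted to `Q`. -/
noncomputable def coxD (n : ℕ) (L : List ℕ) : (ℕ → ℤ) → ℕ → ℤ :=
  L.foldr (fun i f => refD n i ∘ f) id

/-- `η_i = Σ_{j ∈ B(i)} α_j`, where `B(i)` is the set of vertices `j` admitting a
path from `j` to `i` in the quiver `ar`. -/
noncomputable def etaD (n : ℕ) (ar : ℕ → ℕ → Prop) (i : ℕ) : ℕ → ℤ :=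
  ∑ j ∈ Finset.Icc 1 n, if Relation.ReflTransGen ar j i then alphaD n j else 0

/-- `β` is located at the vertex `(i, p)` of the AR quiver `Γ_Q` (level `i`,
horizontal coordinate `p`): the vertices of `Γ_Q` at level `i` are
`(i, ξ_i - 2k) ↦ τ^k(η_i)` for the `k ≥ 0` with `τ^k(η_i)` a positive root. -/
def LocatedAt (n : ℕ) (ar : ℕ → ℕ → Prop) (L : List ℕ) (ξ : ℕ → ℤ)
    (β : ℕ → ℤ) (i : ℕ) (p : ℤ) : Prop :=
  ∃ k : ℕ, IsPosRootD n β ∧ β = (coxD n L)^[k] (etaD n ar i) ∧ p = ξ i - 2 * k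

/-!
`τ` acts on the vectors `±ε_i` by signed permutations. In each orientation of the two arrows
at the branch vertex `n-2`, the roots at levels `n-1` and `n` of one column are `τ^m` of a pair
`ε_c + s ε_e`, `ε_c - s ε_e`, where `e = n` if `ξ_{n-1} = ξ_n` and `e = n-1` otherwise, and
`τ ε_e = -ε_e`; computing `η_{n-1}`, `η_n` and `τ ε_n` uses that the word carries `ε_{n-2}` down the
longest path `a → ⋯ → n-2` of the long arm to `ε_a`. Hence `α + β = ±2ε_b` and `α - β = ±2ε_e`,
and positivity of `α` and `β` forces the sign `+` and `b < e`.
-/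

namespace TypeD

lemma epsD_apply (i k : ℕ) : epsD i k = if k = i then 1 else 0 := Pi.single_apply i 1 k

lemma alphaD_apply (n i m : ℕ) : alphaD n i m =
    if i = n then (if m = n - 1 then 1 else 0) + (if m = n then 1 else 0)
    else (if m = i then 1 else 0) - (if m = i + 1 then 1 else 0) := by
  by_cases h : i = n <;> simp [alphaD, h, epsD_apply]

lemma alphaD_self (n : ℕ) : alphaD n n = epsD (n - 1) + epsD n := if_pos rfl

lemma alphaD_of_ne {n i : ℕ} (h : i ≠ n) : alphaD n i = epsD i - epsD (i + 1) := if_neg h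

lemma alphaD_pred {n : ℕ} (hn : 1 ≤ n) : alphaD n (n - 1) = epsD (n - 1) - epsD n := by
  rw [alphaD_of_ne (by omega), Nat.sub_add_cancel hn]

lemma dotD_epsD {n m : ℕ} (hm : 1 ≤ m) (hmn : m ≤ n) (v : ℕ → ℤ) :
    dotD n (epsD m) v = v m := by
  rw [dotD, Finset.sum_eq_single_of_mem m (Finset.mem_Icc.mpr ⟨hm, hmn⟩)]
  · simp [epsD_apply]
  · intro k _ hk
    simp [epsD_apply, hk]

noncomputable def reflD (n i : ℕ) : Module.End ℤ (ℕ → ℤ) where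
  toFun := refD n i
  map_add' u v := by
    have : dotD n (u + v) (alphaD n i) = dotD n u (alphaD n i) + dotD n v (alphaD n i) := by
      simp only [dotD, Pi.add_apply, add_mul, Finset.sum_add_distrib]
    simp only [refD, this, add_smul]
    abel
  map_smul' c v := by
    have : dotD n (c • v) (alphaD n i) = c * dotD n v (alphaD n i) := by
      simp only [dotD, Pi.smul_apply, smul_eq_mul, mul_assoc, Finset.mul_sum]
    simp only [refD, this, RingHom.id_apply, smul_sub, mul_smul]

@[simp] lemma coe_reflD (n i : ℕ) : ⇑(reflD n i) = refD n i := rfl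

lemma refD_neg (n i : ℕ) (v : ℕ → ℤ) : refD n i (-v) = -refD n i v :=
  map_neg (reflD n i) v

lemma refD_epsD {n i m : ℕ} (hm : 1 ≤ m) (hmn : m ≤ n) :
    refD n i (epsD m) = epsD m - alphaD n i m • alphaD n i := by
  rw [refD, dotD_epsD hm hmn]

lemma refD_epsD_of_ne {n i m : ℕ} (hm : 1 ≤ m) (hmn : m ≤ n) (h : m ≠ i) (h' : m ≠ i + 1)
    (h'' : i = n → m ≠ n - 1) : refD n i (epsD m) = epsD m := by
  have : alphaD n i m = 0 := by
    rw [alphaD_apply]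
    split_ifs <;> omega
  rw [refD_epsD hm hmn, this, zero_smul, sub_zero]

lemma refD_epsD_self {n i : ℕ} (hi : 1 ≤ i) (hin : i < n) : refD n i (epsD i) = epsD (i + 1) := by
  rw [refD_epsD hi hin.le, alphaD_of_ne hin.ne]
  funext k
  simp only [Pi.sub_apply, Pi.smul_apply, smul_eq_mul, epsD_apply]
  split_ifs <;> omega

lemma refD_epsD_succ {n i : ℕ} (hi : 1 ≤ i) (hin : i < n) : refD n i (epsD (i + 1)) = epsD i := by
  rw [refD_epsD (by omega) hin, alphaD_of_ne hin.ne]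
  funext k
  simp only [Pi.sub_apply, Pi.smul_apply, smul_eq_mul, epsD_apply]
  split_ifs <;> omega

lemma refD_self_epsD_pred {n : ℕ} (hn : 2 ≤ n) : refD n n (epsD (n - 1)) = -epsD n := by
  rw [refD_epsD (by omega) (by omega), alphaD_self]
  funext k
  simp only [Pi.sub_apply, Pi.add_apply, Pi.neg_apply, Pi.smul_apply, smul_eq_mul, epsD_apply]
  split_ifs <;> omega

lemma refD_self_epsD_self {n : ℕ} (hn : 2 ≤ n) : refD n n (epsD n) = -epsD (n - 1) := by
  rw [refD_epsD (by omega) le_rfl, alphaD_self]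
  funext k
  simp only [Pi.sub_apply, Pi.add_apply, Pi.neg_apply, Pi.smul_apply, smul_eq_mul, epsD_apply]
  split_ifs <;> omega

lemma refD_pred_epsD_pred {n : ℕ} (hn : 2 ≤ n) : refD n (n - 1) (epsD (n - 1)) = epsD n := by
  rw [refD_epsD_self (by omega) (by omega), Nat.sub_add_cancel (by omega)]

lemma refD_pred_epsD_top {n : ℕ} (hn : 2 ≤ n) : refD n (n - 1) (epsD n) = epsD (n - 1) := by
  conv_lhs => rw [show n = n - 1 + 1 by omega]
  exact refD_epsD_succ (by omega) (by omega)

lemma refD_branch_epsD_pred {n : ℕ} (hn : 3 ≤ n) :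
    refD n (n - 2) (epsD (n - 1)) = epsD (n - 2) := by
  rw [show n - 1 = n - 2 + 1 by omega]
  exact refD_epsD_succ (by omega) (by omega)

lemma refD_branch_epsD_top {n : ℕ} (hn : 2 ≤ n) : refD n (n - 2) (epsD n) = epsD n :=
  refD_epsD_of_ne (by omega) le_rfl (by omega) (by omega) (by omega)

noncomputable def coxLinear (n : ℕ) (L : List ℕ) : Module.End ℤ (ℕ → ℤ) :=
  (L.map (reflD n)).prod

lemma coe_coxLinear (n : ℕ) (L : List ℕ) : ⇑(coxLinear n L) = coxD n L := by
  induction L with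
  | nil => rfl
  | cons i L ih =>
    rw [coxLinear, List.map_cons, List.prod_cons, Module.End.coe_mul, ← coxLinear, ih]
    rfl

lemma coxD_append_cons (n : ℕ) (P Q : List ℕ) (i : ℕ) (v : ℕ → ℤ) :
    coxD n (P ++ i :: Q) v = coxD n P (refD n i (coxD n Q v)) := by
  rw [← coe_coxLinear, coxLinear, List.map_append, List.prod_append, List.map_cons,
    List.prod_cons, ← coxLinear, ← coxLinear, Module.End.mul_apply, Module.End.mul_apply,
    coe_coxLinear, coe_coxLinear, coe_reflD]

lemma coxD_add (n : ℕ) (L : List ℕ) (u v : ℕ → ℤ) :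
    coxD n L (u + v) = coxD n L u + coxD n L v := by
  rw [← coe_coxLinear, map_add]

lemma coxD_sub (n : ℕ) (L : List ℕ) (u v : ℕ → ℤ) :
    coxD n L (u - v) = coxD n L u - coxD n L v := by
  rw [← coe_coxLinear, map_sub]

lemma coxD_neg (n : ℕ) (L : List ℕ) (v : ℕ → ℤ) : coxD n L (-v) = -coxD n L v := by
  rw [← coe_coxLinear, map_neg]

lemma coxD_eq_self {n : ℕ} {L : List ℕ} {v : ℕ → ℤ} (h : ∀ i ∈ L, refD n i v = v) :
    coxD n L v = v := by
  induction L with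
  | nil => rfl
  | cons i L ih =>
    change refD n i (coxD n L v) = v
    rw [ih fun j hj => h j (List.mem_cons_of_mem i hj), h i List.mem_cons_self]

def IsSignedBasisD (n : ℕ) (v : ℕ → ℤ) : Prop :=
  ∃ (s : ℤˣ) (a : ℕ), 1 ≤ a ∧ a ≤ n ∧ v = s • epsD a

lemma isSignedBasisD_refD_epsD {n i a : ℕ} (hn : 2 ≤ n) (hi : 1 ≤ i) (hin : i ≤ n) (ha : 1 ≤ a)
    (han : a ≤ n) : IsSignedBasisD n (refD n i (epsD a)) := by
  by_cases hfix : a ≠ i ∧ a ≠ i + 1 ∧ (i = n → a ≠ n - 1)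
  · exact ⟨1, a, ha, han, by rw [one_smul, refD_epsD_of_ne ha han hfix.1 hfix.2.1 hfix.2.2]⟩
  rcases eq_or_ne i n with h | h
  · rw [h]
    rcases (by omega : a = n - 1 ∨ a = n) with rfl | rfl
    · exact ⟨-1, n, by omega, le_rfl, by rw [refD_self_epsD_pred hn, Units.neg_smul, one_smul]⟩
    · exact ⟨-1, a - 1, by omega, by omega,
        by rw [refD_self_epsD_self hn, Units.neg_smul, one_smul]⟩
  · rcases (by omega : a = i ∨ a = i + 1) with rfl | rfl
    · exact ⟨1, a + 1, by omega, by omega, by rw [refD_epsD_self hi (by omega), one_smul]⟩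
    · exact ⟨1, i, hi, hin, by rw [refD_epsD_succ hi (by omega), one_smul]⟩

lemma isSignedBasisD_refD {n i : ℕ} {v : ℕ → ℤ} (hn : 2 ≤ n) (hv : IsSignedBasisD n v)
    (hi : 1 ≤ i) (hin : i ≤ n) : IsSignedBasisD n (refD n i v) := by
  obtain ⟨s, a, ha, han, rfl⟩ := hv
  obtain ⟨t, b, hb, hbn, hab⟩ := isSignedBasisD_refD_epsD hn hi hin ha han
  refine ⟨s * t, b, hb, hbn, ?_⟩
  rw [Units.smul_def, ← coe_reflD, map_smul, coe_reflD, hab, ← Units.smul_def, mul_smul]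

lemma isSignedBasisD_coxD {n : ℕ} {L : List ℕ} (hn : 2 ≤ n) (hL : ∀ i ∈ L, 1 ≤ i ∧ i ≤ n)
    {v : ℕ → ℤ} (hv : IsSignedBasisD n v) : IsSignedBasisD n (coxD n L v) := by
  induction L with
  | nil => exact hv
  | cons i L ih =>
    obtain ⟨hi, hin⟩ := hL i List.mem_cons_self
    exact isSignedBasisD_refD hn (ih fun j hj => hL j (List.mem_cons_of_mem i hj)) hi hin

lemma IsPosRootD.ne_zero {n : ℕ} {v : ℕ → ℤ} (hv : IsPosRootD n v) : v ≠ 0 := by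
  obtain ⟨i, j, -, hij, -, h | h⟩ := hv <;> rintro rfl <;>
    simpa [epsD_apply, hij.ne] using congrFun h i

lemma IsPosRootD.coeff_eq_one {n a e : ℕ} {s t : ℤ} (hv : IsPosRootD n (s • epsD a + t • epsD e))
    (hae : a < e) : s = 1 := by
  obtain ⟨i, j, -, hij, -, h | h⟩ := hv <;>
  · have hi := congrFun h i
    have hj := congrFun h j
    simp only [Pi.add_apply, Pi.sub_apply, Pi.smul_apply, smul_eq_mul, epsD_apply] at hi hj
    split_ifs at hi hj <;> omega

lemma lt_and_eq_one_of_isPosRootD {n a e : ℕ} {s t : ℤˣ}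
    (h₁ : IsPosRootD n (s • epsD a + t • epsD e)) (h₂ : IsPosRootD n (s • epsD a - t • epsD e)) :
    a < e ∧ s = 1 := by
  rw [Units.smul_def, Units.smul_def] at h₁ h₂
  rcases lt_trichotomy a e with hae | rfl | hea
  · exact ⟨hae, Units.val_eq_one.mp (IsPosRootD.coeff_eq_one h₁ hae)⟩
  · rw [← add_smul] at h₁
    rw [← sub_smul] at h₂
    exfalso
    rcases Int.units_eq_one_or s with rfl | rfl <;> rcases Int.units_eq_one_or t with rfl | rfl
    · exact IsPosRootD.ne_zero h₂ (by simp)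
    · exact IsPosRootD.ne_zero h₁ (by simp)
    · exact IsPosRootD.ne_zero h₁ (by simp)
    · exact IsPosRootD.ne_zero h₂ (by simp)
  · rw [add_comm] at h₁
    rw [sub_eq_add_neg, add_comm, ← neg_smul] at h₂
    have := IsPosRootD.coeff_eq_one h₁ hea
    have := IsPosRootD.coeff_eq_one h₂ hea
    omega

lemma dotD_alphaD_of_lt {n i : ℕ} (hi : 1 ≤ i) (hin : i < n) (v : ℕ → ℤ) :
    dotD n v (alphaD n i) = v i - v (i + 1) := by
  simp [dotD, alphaD_of_ne hin.ne, epsD_apply, mul_sub, Finset.sum_sub_distrib, hi, hin.le,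
    Nat.succ_le_of_lt hin]

lemma dotD_alphaD_self {n : ℕ} (hn : 2 ≤ n) (v : ℕ → ℤ) :
    dotD n v (alphaD n n) = v (n - 1) + v n := by
  simp [dotD, alphaD_self, epsD_apply, mul_add, Finset.sum_add_distrib,
    show 1 ≤ n - 1 by omega, show 1 ≤ n by omega]

/-- The roots `ε_{n-1} ∓ ε_n` of the two spin reflections are orthogonal. -/
lemma refD_pred_comm {n : ℕ} (hn : 2 ≤ n) (v : ℕ → ℤ) :
    refD n (n - 1) (refD n n v) = refD n n (refD n (n - 1) v) := by
  have hpred : ∀ w : ℕ → ℤ, refD n (n - 1) w = w - (w (n - 1) - w n) • alphaD n (n - 1) := by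
    intro w
    rw [refD, dotD_alphaD_of_lt (by omega) (by omega), Nat.sub_add_cancel (by omega)]
  have hself : ∀ w : ℕ → ℤ, refD n n w = w - (w (n - 1) + w n) • alphaD n n := by
    intro w
    rw [refD, dotD_alphaD_self hn]
  rw [hpred, hself, hself, hpred, alphaD_self, alphaD_pred (by omega)]
  funext k
  simp only [Pi.sub_apply, Pi.add_apply, Pi.smul_apply, smul_eq_mul, epsD_apply]
  split_ifs <;> omega

def SpinSupported (n : ℕ) (v : ℕ → ℤ) : Prop := ∀ k < n - 1, v k = 0

lemma spinSupported_epsD {n m : ℕ} (hm : n - 1 ≤ m) : SpinSupported n (epsD m) :=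
  fun k hk => by rw [epsD_apply, if_neg (by omega)]

lemma SpinSupported.neg {n : ℕ} {v : ℕ → ℤ} (hv : SpinSupported n v) : SpinSupported n (-v) := by
  intro k hk
  simp [hv k hk]

lemma spinSupported_refD {n i : ℕ} {v : ℕ → ℤ} (hv : SpinSupported n v) (hi : n - 1 ≤ i) :
    SpinSupported n (refD n i v) := by
  intro k hk
  simp only [refD, Pi.sub_apply, Pi.smul_apply, smul_eq_mul, hv k hk, alphaD_apply]
  split_ifs <;> omega

lemma refD_eq_self_of_spinSupported {n i : ℕ} {v : ℕ → ℤ} (hv : SpinSupported n v)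
    (hi : 1 ≤ i) (hin : i + 3 ≤ n) : refD n i v = v := by
  rw [refD, dotD_alphaD_of_lt hi (by omega), hv i (by omega), hv (i + 1) (by omega), sub_zero,
    zero_smul, sub_zero]

/-- The letters `j ≤ n-3` fix spin-supported vectors, and `s_{n-1}`, `s_n` commute. -/
lemma coxD_of_spinSupported {n : ℕ} (hn : 2 ≤ n) {M : List ℕ} (hnd : M.Nodup)
    (hM : ∀ j ∈ M, 1 ≤ j ∧ j ≤ n) (hbr : n - 2 ∉ M) {v : ℕ → ℤ} (hv : SpinSupported n v) :
    coxD n M v = (if n - 1 ∈ M then refD n (n - 1) else id)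
      ((if n ∈ M then refD n n else id) v) := by
  induction M with
  | nil => simp [coxD]
  | cons j M ih =>
    obtain ⟨hjM, hnd⟩ := List.nodup_cons.1 hnd
    have ih := ih hnd (fun i hi => hM i (List.mem_cons_of_mem j hi))
      (fun h => hbr (List.mem_cons_of_mem j h))
    obtain ⟨hj, hjn⟩ := hM j List.mem_cons_self
    have hj2 : j ≠ n - 2 := fun h => hbr (h ▸ List.mem_cons_self)
    change refD n j (coxD n M v) = _
    rw [ih]
    rcases (by omega : j = n - 1 ∨ j = n ∨ j + 3 ≤ n) with heq | heq | hj3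
    · subst j
      simp [hjM, show n ≠ n - 1 by omega]
    · subst j
      by_cases h : n - 1 ∈ M <;> simp [hjM, h, show n - 1 ≠ n by omega, refD_pred_comm hn]
    · have hw : SpinSupported n ((if n - 1 ∈ M then refD n (n - 1) else id)
          ((if n ∈ M then refD n n else id) v)) := by
        have hv' : SpinSupported n ((if n ∈ M then refD n n else id) v) := by
          split_ifs
          exacts [spinSupported_refD hv (by omega), hv]
        by_cases h : n - 1 ∈ M
        · rw [if_pos h]
          exact spinSupported_refD hv' le_rfl
        · rwa [if_neg h]
      rw [refD_eq_self_of_spinSupported hw hj hj3]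
      simp [show n - 1 ≠ j by omega, show n ≠ j by omega]

structure IsOrientationD (n : ℕ) (ar : ℕ → ℕ → Prop) : Prop where
  edge : ∀ i j, ar i j → edgeD n i j
  orient : ∀ i j, edgeD n i j → (ar i j ↔ ¬ ar j i)

/-- `a → a+1 → ⋯ → n-2` is the longest directed path of the long arm ending at the branch
vertex `n-2`. -/
structure IsArmStart (n : ℕ) (ar : ℕ → ℕ → Prop) (a : ℕ) : Prop where
  one_le : 1 ≤ a
  le_branch : a ≤ n - 2
  arrow_succ : ∀ i, a ≤ i → i + 1 ≤ n - 2 → ar i (i + 1)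
  arrow_pred : 2 ≤ a → ar a (a - 1)

section Quiver

variable {n : ℕ} {ar : ℕ → ℕ → Prop}

lemma IsOrientationD.asymm (hQ : IsOrientationD n ar) {i j : ℕ} (h : ar i j) : ¬ ar j i :=
  (hQ.orient i j (hQ.edge i j h)).1 h

lemma IsOrientationD.arrow_or (hQ : IsOrientationD n ar) {i j : ℕ} (h : edgeD n i j) :
    ar i j ∨ ar j i :=
  (em (ar j i)).elim Or.inr fun h' => Or.inl ((hQ.orient i j h).2 h')

lemma IsOrientationD.branch_pred (hn : 4 ≤ n) (hQ : IsOrientationD n ar) :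
    ar (n - 2) (n - 1) ∨ ar (n - 1) (n - 2) :=
  hQ.arrow_or (Or.inl ⟨by omega, by omega, by omega⟩)

lemma IsOrientationD.branch_top (hQ : IsOrientationD n ar) : ar (n - 2) n ∨ ar n (n - 2) :=
  hQ.arrow_or (Or.inr (Or.inr (Or.inl ⟨rfl, rfl⟩)))

lemma exists_isArmStart (hn : 4 ≤ n) (hQ : IsOrientationD n ar) : ∃ a, IsArmStart n ar a := by
  have hex : ∃ j, 1 ≤ j ∧ ∀ i, j ≤ i → i + 1 ≤ n - 2 → ar i (i + 1) :=
    ⟨n - 2, by omega, fun i _ _ => by omega⟩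
  set a := Nat.find hex with ha
  obtain ⟨ha1, hchain⟩ := Nat.find_spec hex
  refine ⟨a, ha1, Nat.find_min' hex ⟨by omega, fun i _ _ => by omega⟩, hchain, fun ha2 => ?_⟩
  have hmin := Nat.find_min hex (show a - 1 < a by omega)
  push Not at hmin
  obtain ⟨i, hi, hin, hnot⟩ := hmin (by omega)
  obtain rfl : i = a - 1 := by
    by_contra hne
    exact hnot (hchain i (by omega) hin)
  rw [Nat.sub_add_cancel (by omega)] at hnot
  exact (hQ.arrow_or (j := a) (Or.inl ⟨by omega, by omega, by omega⟩)).resolve_left hnot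

lemma reflTransGen_arm {a : ℕ} (ha : IsArmStart n ar a) {j : ℕ} (hj : a ≤ j) :
    ∀ m, j ≤ m → m ≤ n - 2 → Relation.ReflTransGen ar j m := by
  intro m hm
  induction m, hm using Nat.le_induction with
  | base => exact fun _ => .refl
  | succ m hjm ih => exact fun hm => (ih (by omega)).tail (ha.arrow_succ m (by omega) hm)

lemma reflTransGen_branch_iff (hn : 4 ≤ n) (hQ : IsOrientationD n ar) {a : ℕ}
    (ha : IsArmStart n ar a) (j : ℕ) : Relation.ReflTransGen ar j (n - 2) ↔
      (a ≤ j ∧ j ≤ n - 2) ∨ (j = n - 1 ∧ ar (n - 1) (n - 2)) ∨ (j = n ∧ ar n (n - 2)) := by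
  constructor
  · intro h
    -- the right-hand side contains the source of every arrow into it
    refine h.head_induction_on (Or.inl ⟨ha.le_branch, le_rfl⟩) ?_
    intro b c hbc _ hc
    have hcb := hQ.asymm hbc
    rcases hQ.edge b c hbc with ⟨hb1, hbc', hcn⟩ | ⟨hc1, hcb', hbn⟩ | ⟨hb, hc'⟩ | ⟨hb, hc'⟩
    · subst c
      rcases hc with ⟨hac, -⟩ | ⟨hc', hc''⟩ | ⟨hc', -⟩
      · refine Or.inl ⟨Nat.not_lt.1 fun hba => hcb ?_, by omega⟩
        obtain rfl : a = b + 1 := by omega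
        simpa using ha.arrow_pred (by omega)
      · obtain rfl : b = n - 2 := by omega
        exact absurd (by rwa [hc']) hcb
      · omega
    · subst b
      rcases hc with ⟨hac, -⟩ | ⟨hc'', -⟩ | ⟨hc'', -⟩
      · by_cases hcn : c + 1 ≤ n - 2
        · exact absurd (ha.arrow_succ c hac hcn) hcb
        · obtain rfl : c = n - 2 := by omega
          exact Or.inr (Or.inl ⟨by omega, by rwa [show n - 2 + 1 = n - 1 by omega] at hbc⟩)
      · omega
      · omega
    · subst b
      rcases hc with ⟨-, hcn⟩ | ⟨hc'', -⟩ | ⟨-, hnc⟩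
      · omega
      · omega
      · subst c
        exact absurd hnc hcb
    · subst b c
      exact Or.inr (Or.inr ⟨rfl, hbc⟩)
  · rintro (⟨haj, hj⟩ | ⟨rfl, h⟩ | ⟨rfl, h⟩)
    · exact reflTransGen_arm ha haj (n - 2) hj le_rfl
    · exact .single h
    · exact .single h

lemma reflTransGen_leaf_iff (hn : 4 ≤ n) (hQ : IsOrientationD n ar) {i : ℕ}
    (hi : i = n - 1 ∨ i = n) (j : ℕ) : Relation.ReflTransGen ar j i ↔
      j = i ∨ (ar (n - 2) i ∧ Relation.ReflTransGen ar j (n - 2)) := by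
  constructor
  · intro h
    rcases h.cases_tail with rfl | ⟨c, hjc, hci⟩
    · exact Or.inl rfl
    · obtain rfl : c = n - 2 := by rcases hQ.edge c i hci with h | h | h | h <;> omega
      exact Or.inr ⟨hci, hjc⟩
  · rintro (rfl | ⟨h, hj⟩)
    · exact .refl
    · exact hj.tail h

end Quiver

lemma sum_alphaD_Icc {n a m : ℕ} (ham : a ≤ m) (hm : m < n) :
    ∑ j ∈ Finset.Icc a m, alphaD n j = epsD a - epsD (m + 1) := by
  induction m, ham using Nat.le_induction with
  | base => rw [Finset.Icc_self, Finset.sum_singleton, alphaD_of_ne (by omega)]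
  | succ m ham ih =>
    rw [Finset.sum_Icc_succ_top (by omega), ih (by omega), alphaD_of_ne (by omega),
      sub_add_sub_cancel]

section Eta

variable {n : ℕ} {ar : ℕ → ℕ → Prop}

lemma etaD_branch (hn : 4 ≤ n) (hQ : IsOrientationD n ar) {a : ℕ} (ha : IsArmStart n ar a) :
    etaD n ar (n - 2) = epsD a - epsD (n - 1) + (if ar (n - 1) (n - 2) then alphaD n (n - 1) else 0)
      + (if ar n (n - 2) then alphaD n n else 0) := by
  have hpt : ∀ j, (if Relation.ReflTransGen ar j (n - 2) then alphaD n j else 0) =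
      (if j ∈ Finset.Icc a (n - 2) then alphaD n j else 0)
      + (if j = n - 1 then (if ar (n - 1) (n - 2) then alphaD n j else 0) else 0)
      + (if j = n then (if ar n (n - 2) then alphaD n j else 0) else 0) := by
    intro j
    simp only [reflTransGen_branch_iff hn hQ ha, Finset.mem_Icc]
    by_cases hA : a ≤ j ∧ j ≤ n - 2
    · simp [hA, show j ≠ n - 1 by omega, show j ≠ n by omega]
    · by_cases hB : j = n - 1
      · subst j
        simp only [hA, false_or, true_and, if_true, show n - 1 ≠ n by omega, false_and, or_false,
          if_false, add_zero, zero_add]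
      · by_cases hC : j = n
        · subst j
          simp [hA, hB]
        · simp [hA, hB, hC]
  rw [etaD, Finset.sum_congr rfl fun j _ => hpt j, Finset.sum_add_distrib, Finset.sum_add_distrib,
    Finset.sum_ite_mem, Finset.inter_eq_right.2 (Finset.Icc_subset_Icc ha.one_le (by omega)),
    sum_alphaD_Icc ha.le_branch (by omega), Finset.sum_ite_eq', Finset.sum_ite_eq',
    if_pos (Finset.mem_Icc.2 ⟨by omega, by omega⟩), if_pos (Finset.mem_Icc.2 ⟨by omega, le_rfl⟩),
    show n - 2 + 1 = n - 1 by omega]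

lemma etaD_leaf (hn : 4 ≤ n) (hQ : IsOrientationD n ar) {a : ℕ} (ha : IsArmStart n ar a)
    {i : ℕ} (hi : i = n - 1 ∨ i = n) :
    etaD n ar i = alphaD n i + if ar (n - 2) i then etaD n ar (n - 2) else 0 := by
  have hpt : ∀ j, (if Relation.ReflTransGen ar j i then alphaD n j else 0) =
      (if j = i then alphaD n j else 0)
      + (if ar (n - 2) i then (if Relation.ReflTransGen ar j (n - 2) then alphaD n j else 0)
          else 0) := by
    intro j
    rw [reflTransGen_leaf_iff hn hQ hi]
    by_cases hji : j = i
    · subst j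
      have : ar (n - 2) i → ¬ Relation.ReflTransGen ar i (n - 2) := by
        rw [reflTransGen_branch_iff hn hQ ha]
        rintro h (h' | ⟨rfl, h'⟩ | ⟨rfl, h'⟩)
        · omega
        all_goals exact hQ.asymm h h'
      by_cases h : ar (n - 2) i <;> simp [h, this]
    · simp [hji, ite_and]
  simp only [etaD]
  rw [Finset.sum_congr rfl fun j _ => hpt j, Finset.sum_add_distrib, Finset.sum_ite_eq',
    Finset.sum_ite_irrel, Finset.sum_const_zero,
    if_pos (Finset.mem_Icc.2 ⟨by omega, by omega⟩)]

end Eta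

lemma mem_prefix_iff_idxOf_lt {α : Type*} [BEq α] [LawfulBEq α] {P Q : List α} {x y : α}
    (hnd : (P ++ x :: Q).Nodup) :
    y ∈ P ↔ (P ++ x :: Q).idxOf y < (P ++ x :: Q).idxOf x := by
  have hx : x ∉ P := fun h => (List.nodup_append.1 hnd).2.2 x h x List.mem_cons_self rfl
  rw [List.idxOf_append_of_notMem hx, List.idxOf_cons_self, add_zero]
  constructor
  · intro h
    rw [List.idxOf_append_of_mem h]
    exact List.idxOf_lt_length_iff.2 h
  · intro h
    by_contra h'
    rw [List.idxOf_append_of_notMem h'] at h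
    omega

structure IsAdaptedWord (n : ℕ) (ar : ℕ → ℕ → Prop) (L : List ℕ) : Prop where
  nodup : L.Nodup
  mem_iff : ∀ i, i ∈ L ↔ 1 ≤ i ∧ i ≤ n
  idxOf_lt : ∀ i j, ar i j → L.idxOf i < L.idxOf j

section AdaptedWord

variable {n : ℕ} {ar : ℕ → ℕ → Prop} {L P Q : List ℕ} {x y : ℕ}

lemma IsAdaptedWord.mem_prefix (hW : IsAdaptedWord n ar L) (hL : L = P ++ x :: Q) (h : ar y x) :
    y ∈ P := by
  subst hL
  exact (mem_prefix_iff_idxOf_lt hW.nodup).2 (hW.idxOf_lt y x h)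

lemma IsAdaptedWord.notMem_prefix (hW : IsAdaptedWord n ar L) (hL : L = P ++ x :: Q)
    (h : ar x y) : y ∉ P := by
  subst hL
  intro hyP
  have := (mem_prefix_iff_idxOf_lt hW.nodup).1 hyP
  have := hW.idxOf_lt x y h
  omega

lemma IsAdaptedWord.mem_suffix (hW : IsAdaptedWord n ar L) (hL : L = P ++ x :: Q) (h : ar x y)
    (hy : 1 ≤ y ∧ y ≤ n) : y ∈ Q := by
  have hyP := hW.notMem_prefix hL h
  have hyx : y ≠ x := by
    rintro rfl
    exact lt_irrefl _ (hW.idxOf_lt y y h)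
  have hyL := (hW.mem_iff y).2 hy
  rw [hL] at hyL
  simpa [hyP, hyx] using hyL

lemma IsAdaptedWord.notMem_suffix (hW : IsAdaptedWord n ar L) (hL : L = P ++ x :: Q)
    (h : ar y x) : y ∉ Q := by
  have hyP := hW.mem_prefix hL h
  have hnd := hW.nodup
  rw [hL] at hnd
  exact fun hyQ => (List.nodup_append.1 hnd).2.2 y hyP y (List.mem_cons_of_mem x hyQ) rfl

lemma IsAdaptedWord.prefix_spec (hW : IsAdaptedWord n ar L) (hL : L = P ++ x :: Q) :
    P.Nodup ∧ (∀ j ∈ P, 1 ≤ j ∧ j ≤ n) ∧ x ∉ P := by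
  have hnd := hW.nodup
  rw [hL] at hnd
  refine ⟨(List.nodup_append.1 hnd).1, fun j hj => (hW.mem_iff j).1 (by simp [hL, hj]),
    fun hx => (List.nodup_append.1 hnd).2.2 x hx x List.mem_cons_self rfl⟩

lemma IsAdaptedWord.suffix_spec (hW : IsAdaptedWord n ar L) (hL : L = P ++ x :: Q) :
    Q.Nodup ∧ (∀ j ∈ Q, 1 ≤ j ∧ j ≤ n) ∧ x ∉ Q := by
  have hnd := hW.nodup
  rw [hL] at hnd
  obtain ⟨hxQ, hQ⟩ := List.nodup_cons.1 (List.nodup_append.1 hnd).2.1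
  exact ⟨hQ, fun j hj => (hW.mem_iff j).1 (by simp [hL, hj]), hxQ⟩

end AdaptedWord

section Coxeter

variable {n : ℕ} {ar : ℕ → ℕ → Prop} {L : List ℕ}

/-- Read from right to left, the part of the word before `m` moves `ε_m` down the arm
`m → m-1 → ⋯ → a`, and stops at `a` because `s_{a-1}` only occurs after `s_a`. -/
lemma coxD_epsD_descent (hn : 4 ≤ n) (hW : IsAdaptedWord n ar L) {a : ℕ}
    (ha : IsArmStart n ar a) {m : ℕ} (ham : a ≤ m) (hm : m ≤ n - 2) {P Q : List ℕ}
    (hL : L = P ++ m :: Q) : coxD n P (epsD m) = epsD a := by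
  have := ha.one_le
  have := ha.le_branch
  induction m, ham using Nat.le_induction generalizing P Q with
  | base =>
    obtain ⟨-, hPr, haP⟩ := hW.prefix_spec hL
    refine coxD_eq_self fun j hj => ?_
    have hj1 := (hPr j hj).1
    refine refD_epsD_of_ne ha.one_le (by omega) ?_ ?_ (by omega)
    · rintro rfl
      exact haP hj
    · rintro rfl
      exact hW.notMem_prefix hL (ha.arrow_pred (by omega)) (by rwa [Nat.add_sub_cancel])
  | succ m ham ih =>
    obtain ⟨P₁, P₂, rfl⟩ := List.append_of_mem (hW.mem_prefix hL (ha.arrow_succ m ham hm))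
    obtain ⟨hPnd, hPr, hmP⟩ := hW.prefix_spec hL
    have hmP₂ : m ∉ P₂ := (List.nodup_cons.1 (List.nodup_append.1 hPnd).2.1).1
    have hfix : coxD n P₂ (epsD (m + 1)) = epsD (m + 1) := coxD_eq_self fun j hj => by
      have hj' := hPr j (by simp [hj])
      refine refD_epsD_of_ne (by omega) (by omega) ?_ ?_ (by omega)
      · rintro rfl
        exact hmP (by simp [hj])
      · intro hjm
        exact hmP₂ (by rwa [Nat.add_right_cancel hjm])
    rw [coxD_append_cons, hfix, refD_epsD_succ (by omega) (by omega),
      ih (by omega) (Q := P₂ ++ (m + 1) :: Q) (by simp [hL])]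

lemma coxD_epsD_top_of_same_side (hn : 4 ≤ n) (hQ : IsOrientationD n ar)
    (hW : IsAdaptedWord n ar L) (h : ar (n - 2) (n - 1) ↔ ar (n - 2) n) :
    coxD n L (epsD n) = -epsD n := by
  obtain ⟨P, Q, hL⟩ := List.append_of_mem ((hW.mem_iff (n - 2)).2 ⟨by omega, by omega⟩)
  obtain ⟨hPnd, hPr, hP⟩ := hW.prefix_spec hL
  obtain ⟨hQnd, hQr, hQ'⟩ := hW.suffix_spec hL
  have hεn := spinSupported_epsD (n := n) (m := n) (by omega)
  rw [hL, coxD_append_cons, coxD_of_spinSupported (by omega) hQnd hQr hQ' hεn]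
  rcases hQ.branch_pred hn with h1 | h1
  · have h2 := h.1 h1
    rw [if_pos (hW.mem_suffix hL h1 ⟨by omega, by omega⟩),
      if_pos (hW.mem_suffix hL h2 ⟨by omega, le_rfl⟩), refD_self_epsD_self (by omega), refD_neg,
      refD_pred_epsD_pred (by omega), refD_neg, refD_branch_epsD_top (by omega),
      coxD_of_spinSupported (by omega) hPnd hPr hP hεn.neg, if_neg (hW.notMem_prefix hL h1),
      if_neg (hW.notMem_prefix hL h2)]
    rfl
  · have h2 : ar n (n - 2) := hQ.branch_top.resolve_left fun h2 => hQ.asymm h1 (h.2 h2)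
    rw [if_neg (hW.notMem_suffix hL h1), if_neg (hW.notMem_suffix hL h2), id, id,
      refD_branch_epsD_top (by omega), coxD_of_spinSupported (by omega) hPnd hPr hP hεn,
      if_pos (hW.mem_prefix hL h1), if_pos (hW.mem_prefix hL h2), refD_self_epsD_self (by omega),
      refD_neg, refD_pred_epsD_pred (by omega)]

lemma coxD_epsD_pred_of_opposite_sides (hn : 4 ≤ n) (hQ : IsOrientationD n ar)
    (hW : IsAdaptedWord n ar L) (h : ar (n - 2) (n - 1) ↔ ar n (n - 2)) :
    coxD n L (epsD (n - 1)) = -epsD (n - 1) := by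
  obtain ⟨P, Q, hL⟩ := List.append_of_mem ((hW.mem_iff (n - 2)).2 ⟨by omega, by omega⟩)
  obtain ⟨hPnd, hPr, hP⟩ := hW.prefix_spec hL
  obtain ⟨hQnd, hQr, hQ'⟩ := hW.suffix_spec hL
  rw [hL, coxD_append_cons,
    coxD_of_spinSupported (by omega) hQnd hQr hQ' (spinSupported_epsD le_rfl)]
  rcases hQ.branch_pred hn with h1 | h1
  · have h2 := h.1 h1
    rw [if_pos (hW.mem_suffix hL h1 ⟨by omega, by omega⟩), if_neg (hW.notMem_suffix hL h2), id,
      refD_pred_epsD_pred (by omega), refD_branch_epsD_top (by omega),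
      coxD_of_spinSupported (by omega) hPnd hPr hP (spinSupported_epsD (by omega)),
      if_neg (hW.notMem_prefix hL h1), if_pos (hW.mem_prefix hL h2), refD_self_epsD_self (by omega)]
    rfl
  · have h2 : ar (n - 2) n := hQ.branch_top.resolve_right fun h2 => hQ.asymm h1 (h.2 h2)
    rw [if_neg (hW.notMem_suffix hL h1), if_pos (hW.mem_suffix hL h2 ⟨by omega, le_rfl⟩),
      refD_self_epsD_pred (by omega), id, refD_neg, refD_branch_epsD_top (by omega),
      coxD_of_spinSupported (by omega) hPnd hPr hP (spinSupported_epsD (m := n) (by omega)).neg,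
      if_pos (hW.mem_prefix hL h1), if_neg (hW.notMem_prefix hL h2), id, refD_neg,
      refD_pred_epsD_top (by omega)]

lemma coxD_epsD_top_of_opposite_sides (hn : 4 ≤ n) (hW : IsAdaptedWord n ar L) {a : ℕ}
    (ha : IsArmStart n ar a) {x y : ℕ} (hxy : x = n - 1 ∧ y = n ∨ x = n ∧ y = n - 1)
    (hx : ar x (n - 2)) (hy : ar (n - 2) y) :
    coxD n L (epsD n) = (if x = n then 1 else -1 : ℤˣ) • epsD a := by
  obtain ⟨P, Q, hL⟩ := List.append_of_mem ((hW.mem_iff (n - 2)).2 ⟨by omega, by omega⟩)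
  obtain ⟨hQnd, hQr, hQ'⟩ := hW.suffix_spec hL
  have hdesc := coxD_epsD_descent hn hW ha ha.le_branch le_rfl hL
  rw [hL, coxD_append_cons,
    coxD_of_spinSupported (by omega) hQnd hQr hQ' (spinSupported_epsD (by omega))]
  rcases hxy with ⟨rfl, rfl⟩ | ⟨rfl, rfl⟩
  · rw [if_neg (hW.notMem_suffix hL hx), if_pos (hW.mem_suffix hL hy ⟨by omega, le_rfl⟩), id,
      refD_self_epsD_self (by omega), refD_neg, refD_branch_epsD_pred (by omega), coxD_neg, hdesc,
      if_neg (by omega), Units.neg_smul, one_smul]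
  · rw [if_pos (hW.mem_suffix hL hy ⟨by omega, by omega⟩), if_neg (hW.notMem_suffix hL hx), id,
      refD_pred_epsD_top (by omega), refD_branch_epsD_pred (by omega), hdesc, if_pos rfl, one_smul]

end Coxeter

lemma isSignedBasisD_iterate_coxD {n : ℕ} {L : List ℕ} (hn : 2 ≤ n)
    (hL : ∀ i ∈ L, 1 ≤ i ∧ i ≤ n) {v : ℕ → ℤ} (hv : IsSignedBasisD n v) (m : ℕ) :
    IsSignedBasisD n ((coxD n L)^[m] v) := by
  induction m with
  | zero => exact hv
  | succ m ih =>
    rw [Function.iterate_succ_apply']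
    exact isSignedBasisD_coxD hn hL ih

lemma iterate_coxD_epsD_of_neg {n e : ℕ} {L : List ℕ} (he : coxD n L (epsD e) = -epsD e)
    (m : ℕ) : (coxD n L)^[m] (epsD e) = ((-1 : ℤˣ) ^ m) • epsD e := by
  induction m with
  | zero => simp
  | succ m ih =>
    rw [Function.iterate_succ_apply', ih, Units.smul_def, ← coe_coxLinear, map_smul,
      coe_coxLinear, he, pow_succ, mul_smul, Units.neg_smul, one_smul, Units.smul_def]

lemma located_pair {n : ℕ} (hn : 2 ≤ n) {L : List ℕ} (hL : ∀ j ∈ L, 1 ≤ j ∧ j ≤ n)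
    {c e m : ℕ} (hc : 1 ≤ c) (hcn : c ≤ n) (he : coxD n L (epsD e) = -epsD e) (s : ℤˣ)
    {α β : ℕ → ℤ} (hα : α = (coxD n L)^[m] (epsD c + s • epsD e))
    (hβ : β = (coxD n L)^[m] (epsD c - s • epsD e))
    (hαr : IsPosRootD n α) (hβr : IsPosRootD n β) :
    ∃ a, 1 ≤ a ∧ a < e ∧ α + β = (2 : ℤ) • epsD a ∧
      ((α = epsD a + epsD e ∧ β = epsD a - epsD e) ∨
        (α = epsD a - epsD e ∧ β = epsD a + epsD e)) := by
  have hT : (coxD n L)^[m] = ⇑(coxLinear n L ^ m) := by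
    rw [Module.End.coe_pow, coe_coxLinear]
  obtain ⟨t, a, ha, han, hx⟩ :=
    isSignedBasisD_iterate_coxD hn hL ⟨1, c, hc, hcn, (one_smul _ _).symm⟩ m
  have hy : (coxD n L)^[m] (s • epsD e) = (s * (-1) ^ m) • epsD e := by
    rw [hT, Units.smul_def, map_smul, ← hT, iterate_coxD_epsD_of_neg he, ← Units.smul_def,
      mul_smul]
  rw [hT, map_add, ← hT, hx, hy] at hα
  rw [hT, map_sub, ← hT, hx, hy] at hβ
  subst hα hβ
  obtain ⟨hae, rfl⟩ := lt_and_eq_one_of_isPosRootD hαr hβr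
  refine ⟨a, ha, hae, by rw [one_smul, add_add_sub_cancel, two_smul], ?_⟩
  rcases Int.units_eq_one_or (s * (-1) ^ m) with h | h <;> rw [h]
  · exact Or.inl ⟨by simp, by simp⟩
  · exact Or.inr ⟨by simp [sub_eq_add_neg], by simp [sub_eq_add_neg]⟩

section Cases

variable {n : ℕ} {ar : ℕ → ℕ → Prop} {L : List ℕ} {ξ : ℕ → ℤ} {k₁ k₂ : ℕ} {α β : ℕ → ℤ}

lemma located_pair_of_same_side (hn : 4 ≤ n) (hQ : IsOrientationD n ar)
    (hW : IsAdaptedWord n ar L) (hξ : ∀ i j, ar i j → ξ j = ξ i - 1)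
    (h : ar (n - 2) (n - 1) ↔ ar (n - 2) n) (hk : ξ (n - 1) - 2 * k₁ = ξ n - 2 * k₂)
    (hα : α = (coxD n L)^[k₁] (etaD n ar (n - 1))) (hβ : β = (coxD n L)^[k₂] (etaD n ar n))
    (hαr : IsPosRootD n α) (hβr : IsPosRootD n β) :
    ξ (n - 1) = ξ n ∧ ∃ a, 1 ≤ a ∧ a < n ∧ α + β = (2 : ℤ) • epsD a ∧
      ((α = epsD a + epsD n ∧ β = epsD a - epsD n) ∨
        (α = epsD a - epsD n ∧ β = epsD a + epsD n)) := by
  obtain ⟨a, ha⟩ := exists_isArmStart hn hQ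
  have hpred := alphaD_pred (n := n) (by omega)
  obtain ⟨c, hc, hcn, hξeq, hη₁, hη₂⟩ : ∃ c, 1 ≤ c ∧ c ≤ n ∧ ξ (n - 1) = ξ n ∧
      etaD n ar (n - 1) = epsD c + (-1 : ℤˣ) • epsD n ∧
      etaD n ar n = epsD c - (-1 : ℤˣ) • epsD n := by
    rw [etaD_leaf hn hQ ha (Or.inl rfl), etaD_leaf hn hQ ha (Or.inr rfl), etaD_branch hn hQ ha,
      hpred, alphaD_self, Units.neg_smul, one_smul]
    rcases hQ.branch_pred hn with h1 | h1
    · have h2 := h.1 h1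
      refine ⟨a, ha.one_le, by have := ha.le_branch; omega,
        by have := hξ _ _ h1; have := hξ _ _ h2; omega, ?_, ?_⟩ <;>
        simp only [if_pos h1, if_pos h2, if_neg (hQ.asymm h1), if_neg (hQ.asymm h2)] <;> abel
    · have h2 : ar n (n - 2) := hQ.branch_top.resolve_left fun h2 => hQ.asymm h1 (h.2 h2)
      refine ⟨n - 1, by omega, by omega, by have := hξ _ _ h1; have := hξ _ _ h2; omega, ?_, ?_⟩ <;>
        simp only [if_neg (hQ.asymm h1), if_neg (hQ.asymm h2)] <;> abel
  obtain rfl : k₁ = k₂ := by omega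
  exact ⟨hξeq, located_pair (by omega) (fun j hj => (hW.mem_iff j).1 hj) hc hcn
    (coxD_epsD_top_of_same_side hn hQ hW h) (-1) (hη₁ ▸ hα) (hη₂ ▸ hβ) hαr hβr⟩

lemma located_pair_of_source_top (hn : 4 ≤ n) (hQ : IsOrientationD n ar)
    (hW : IsAdaptedWord n ar L) {a : ℕ} (ha : IsArmStart n ar a) (h1 : ar (n - 2) (n - 1))
    (h2 : ar n (n - 2)) {m : ℕ} (hα : α = (coxD n L)^[m] (etaD n ar (n - 1)))
    (hβ : β = (coxD n L)^[m + 1] (etaD n ar n)) (hαr : IsPosRootD n α) (hβr : IsPosRootD n β) :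
    ∃ a, 1 ≤ a ∧ a < n - 1 ∧ α + β = (2 : ℤ) • epsD a ∧
      ((α = epsD a + epsD (n - 1) ∧ β = epsD a - epsD (n - 1)) ∨
        (α = epsD a - epsD (n - 1) ∧ β = epsD a + epsD (n - 1))) := by
  have hτ := coxD_epsD_pred_of_opposite_sides hn hQ hW (iff_of_true h1 h2)
  have hη₁ : etaD n ar (n - 1) = epsD a + (1 : ℤˣ) • epsD (n - 1) := by
    rw [etaD_leaf hn hQ ha (Or.inl rfl), if_pos h1, etaD_branch hn hQ ha, if_neg (hQ.asymm h1),
      if_pos h2, alphaD_pred (by omega), alphaD_self, one_smul]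
    abel
  have hη₂ : coxD n L (etaD n ar n) = epsD a - (1 : ℤˣ) • epsD (n - 1) := by
    rw [etaD_leaf hn hQ ha (Or.inr rfl), if_neg (hQ.asymm h2), add_zero, alphaD_self, coxD_add,
      hτ, coxD_epsD_top_of_opposite_sides hn hW ha (Or.inr ⟨rfl, rfl⟩) h2 h1, if_pos rfl,
      one_smul, one_smul]
    abel
  rw [Function.iterate_succ_apply] at hβ
  exact located_pair (by omega) (fun j hj => (hW.mem_iff j).1 hj) ha.one_le
    (ha.le_branch.trans (Nat.sub_le n 2)) hτ 1
    (hη₁ ▸ hα) (hη₂ ▸ hβ) hαr hβr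

lemma located_pair_of_source_pred (hn : 4 ≤ n) (hQ : IsOrientationD n ar)
    (hW : IsAdaptedWord n ar L) {a : ℕ} (ha : IsArmStart n ar a) (h1 : ar (n - 1) (n - 2))
    (h2 : ar (n - 2) n) {m : ℕ} (hα : α = (coxD n L)^[m + 1] (etaD n ar (n - 1)))
    (hβ : β = (coxD n L)^[m] (etaD n ar n)) (hαr : IsPosRootD n α) (hβr : IsPosRootD n β) :
    ∃ a, 1 ≤ a ∧ a < n - 1 ∧ α + β = (2 : ℤ) • epsD a ∧
      ((α = epsD a + epsD (n - 1) ∧ β = epsD a - epsD (n - 1)) ∨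
        (α = epsD a - epsD (n - 1) ∧ β = epsD a + epsD (n - 1))) := by
  have hτ := coxD_epsD_pred_of_opposite_sides hn hQ hW
    (iff_of_false (hQ.asymm h1) (hQ.asymm h2))
  have hη₁ : coxD n L (etaD n ar (n - 1)) = epsD a + (-1 : ℤˣ) • epsD (n - 1) := by
    rw [etaD_leaf hn hQ ha (Or.inl rfl), if_neg (hQ.asymm h1), add_zero, alphaD_pred (by omega),
      coxD_sub, hτ, coxD_epsD_top_of_opposite_sides hn hW ha (Or.inl ⟨rfl, rfl⟩) h1 h2,
      if_neg (by omega), Units.neg_smul, one_smul, Units.neg_smul, one_smul]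
    abel
  have hη₂ : etaD n ar n = epsD a - (-1 : ℤˣ) • epsD (n - 1) := by
    rw [etaD_leaf hn hQ ha (Or.inr rfl), if_pos h2, etaD_branch hn hQ ha, if_pos h1,
      if_neg (hQ.asymm h2), alphaD_pred (by omega), alphaD_self, Units.neg_smul, one_smul]
    abel
  rw [Function.iterate_succ_apply] at hα
  exact located_pair (by omega) (fun j hj => (hW.mem_iff j).1 hj) ha.one_le
    (ha.le_branch.trans (Nat.sub_le n 2)) hτ (-1)
    (hη₁ ▸ hα) (hη₂ ▸ hβ) hαr hβr

lemma located_pair_of_opposite_sides (hn : 4 ≤ n) (hQ : IsOrientationD n ar)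
    (hW : IsAdaptedWord n ar L) (hξ : ∀ i j, ar i j → ξ j = ξ i - 1)
    (h : ¬(ar (n - 2) (n - 1) ↔ ar (n - 2) n)) (hk : ξ (n - 1) - 2 * k₁ = ξ n - 2 * k₂)
    (hα : α = (coxD n L)^[k₁] (etaD n ar (n - 1))) (hβ : β = (coxD n L)^[k₂] (etaD n ar n))
    (hαr : IsPosRootD n α) (hβr : IsPosRootD n β) :
    |ξ (n - 1) - ξ n| = 2 ∧ ∃ a, 1 ≤ a ∧ a < n - 1 ∧ α + β = (2 : ℤ) • epsD a ∧
      ((α = epsD a + epsD (n - 1) ∧ β = epsD a - epsD (n - 1)) ∨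
        (α = epsD a - epsD (n - 1) ∧ β = epsD a + epsD (n - 1))) := by
  obtain ⟨a, ha⟩ := exists_isArmStart hn hQ
  rcases hQ.branch_pred hn with h1 | h1
  · have h2 : ar n (n - 2) := hQ.branch_top.resolve_left fun h2 => h (iff_of_true h1 h2)
    have := hξ _ _ h1
    have := hξ _ _ h2
    obtain rfl : k₂ = k₁ + 1 := by omega
    exact ⟨by rw [abs_eq (by norm_num)]; omega,
      located_pair_of_source_top hn hQ hW ha h1 h2 hα hβ hαr hβr⟩
  · have h2 : ar (n - 2) n := hQ.branch_top.resolve_right fun h2 =>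
      h (iff_of_false (hQ.asymm h1) (hQ.asymm h2))
    have := hξ _ _ h1
    have := hξ _ _ h2
    obtain rfl : k₁ = k₂ + 1 := by omega
    exact ⟨by rw [abs_eq (by norm_num)]; omega,
      located_pair_of_source_pred hn hQ hW ha h1 h2 hα hβ hαr hβr⟩

end Cases

end TypeD

open TypeD in
/-- in the AR quiver `Γ_Q` of a Dynkin quiver `Q` of type `D_n`, if
positive roots `α, β` are located at `(n-1, k)` and `(n, k)` respectively, then
`α + β = 2ε_a` for some `1 ≤ a ≤ n-1`; moreover `{α, β} = {ε_a + ε_n, ε_a - ε_n}`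
if `ξ_{n-1} = ξ_n`, and `{α, β} = {ε_a + ε_{n-1}, ε_a - ε_{n-1}}` if
`|ξ_{n-1} - ξ_n| = 2`. -/
theorem stmt11 (n : ℕ) (hn : 4 ≤ n)
    -- the quiver `Q`: an orientation `ar` of the type `D_n` diagram
    (ar : ℕ → ℕ → Prop) (har : ∀ i j, ar i j → edgeD n i j)
    (hor : ∀ i j, edgeD n i j → (ar i j ↔ ¬ ar j i))
    -- a height function on `Q`
    (ξ : ℕ → ℤ) (hξ : ∀ i j, ar i j → ξ j = ξ i - 1)
    -- an enumeration of the vertices adapted to `Q`, giving the Coxeter element `τ = coxD n L`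
    (L : List ℕ) (hLnd : L.Nodup) (hLmem : ∀ i, i ∈ L ↔ 1 ≤ i ∧ i ≤ n)
    (hadapt : ∀ i j, ar i j → L.idxOf i < L.idxOf j)
    (α β : ℕ → ℤ) (k : ℤ)
    (hα : LocatedAt n ar L ξ α (n - 1) k) (hβ : LocatedAt n ar L ξ β n k) :
    ∃ a : ℕ, 1 ≤ a ∧ a ≤ n - 1 ∧ α + β = (2 : ℤ) • epsD a ∧
      (ξ (n - 1) = ξ n →
        (α = epsD a + epsD n ∧ β = epsD a - epsD n) ∨
        (α = epsD a - epsD n ∧ β = epsD a + epsD n)) ∧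
      (|ξ (n - 1) - ξ n| = 2 →
        (α = epsD a + epsD (n - 1) ∧ β = epsD a - epsD (n - 1)) ∨
        (α = epsD a - epsD (n - 1) ∧ β = epsD a + epsD (n - 1))) := by
  obtain ⟨k₁, hαr, hα, hk₁⟩ := hα
  obtain ⟨k₂, hβr, hβ, hk₂⟩ := hβ
  have hQ : IsOrientationD n ar := ⟨har, hor⟩
  have hW : IsAdaptedWord n ar L := ⟨hLnd, hLmem, hadapt⟩
  have hk : ξ (n - 1) - 2 * k₁ = ξ n - 2 * k₂ := hk₁.symm.trans hk₂
  by_cases h : ar (n - 2) (n - 1) ↔ ar (n - 2) n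
  · obtain ⟨hξeq, a, ha, han, hsum, hpair⟩ :=
      located_pair_of_same_side hn hQ hW hξ h hk hα hβ hαr hβr
    exact ⟨a, ha, by omega, hsum, fun _ => hpair, fun h2 => by simp [hξeq] at h2⟩
  · obtain ⟨hξne, a, ha, han, hsum, hpair⟩ :=
      located_pair_of_opposite_sides hn hQ hW hξ h hk hα hβ hαr hβr
    exact ⟨a, ha, by omega, hsum, fun h2 => by simp [h2] at hξne, fun _ => hpair⟩
end
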